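/- Let (Y_n)_{n≥0} be a sequence of nonnegative, identically distributed random variables on a common probability space. If E[log⁻ Y_0] < ∞ (in particular Y_0 > 0 a.s.), then for any β ∈ (0,1), inf_{n≥0} β^{−n} Y_n > 0 almost surely. -/

import Mathlib

/-!
Choose `r ∈ (β, 1)`. Since `Y n` has the law of `Y 0`, the event `Y n < r ^ n` has the
probability of `log⁻ Y 0 > n · (-log r)`, and these tail probabilities are summable because
`log⁻ Y 0` is integrable. By Borel–Cantelli, almost surely `Y n ≥ r ^ n` for all large `n`, so
`Y n / β ^ n ≥ (r / β) ^ n → ∞`. A sequence of positive reals tending to infinity attains its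
infimum, which is therefore positive.
-/

open MeasureTheory Filter
open scoped ENNReal

lemma tsum_ite_natCast_add_one_le_le_ofReal (x : ℝ) :
    ∑' n : ℕ, (if (n : ℝ) + 1 ≤ x then 1 else 0 : ℝ≥0∞) ≤ ENNReal.ofReal x := by
  have hfloor : ∀ n : ℕ, (n : ℝ) + 1 ≤ x ↔ n ∈ Finset.range ⌊x⌋₊ := fun n => by
    rw [Finset.mem_range, ← Nat.add_one_le_iff, Nat.le_floor_iff' n.succ_ne_zero, Nat.cast_succ]
  simp_rw [hfloor]
  rw [tsum_eq_sum fun n hn => if_neg hn, Finset.sum_boole]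
  simp only [Finset.filter_mem_eq_inter, Finset.inter_self, Finset.card_range]
  rcases Nat.eq_zero_or_pos ⌊x⌋₊ with h0 | h0
  · simp [h0]
  · exact (ENNReal.natCast_le_ofReal h0.ne').2
      (Nat.floor_le (zero_le_one.trans (Nat.floor_pos.1 h0)))

lemma tsum_measure_natCast_add_one_le_le_lintegral {Ω : Type*} [MeasurableSpace Ω]
    (μ : Measure Ω) {h : Ω → ℝ} (hh : Measurable h) :
    ∑' n : ℕ, μ {ω | (n : ℝ) + 1 ≤ h ω} ≤ ∫⁻ ω, ENNReal.ofReal (h ω) ∂μ := by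
  have hmeas : ∀ n : ℕ, MeasurableSet {ω | (n : ℝ) + 1 ≤ h ω} := fun n =>
    measurableSet_le measurable_const hh
  calc ∑' n : ℕ, μ {ω | (n : ℝ) + 1 ≤ h ω}
      = ∑' n : ℕ, ∫⁻ ω, {ω | (n : ℝ) + 1 ≤ h ω}.indicator 1 ω ∂μ := by
        simp_rw [lintegral_indicator_one (hmeas _)]
    _ = ∫⁻ ω, ∑' n : ℕ, {ω | (n : ℝ) + 1 ≤ h ω}.indicator 1 ω ∂μ :=
        (lintegral_tsum fun n => (measurable_one.indicator (hmeas n)).aemeasurable).symm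
    _ ≤ ∫⁻ ω, ENNReal.ofReal (h ω) ∂μ := lintegral_mono fun ω => by
        simpa only [Set.indicator_apply, Set.mem_ofPred_eq, Pi.one_apply]
          using tsum_ite_natCast_add_one_le_le_ofReal (h ω)

lemma lt_iInf_of_tendsto_cofinite_atTop {ι α : Type*} [Nonempty ι]
    [ConditionallyCompleteLinearOrder α] {u : ι → α} {a : α} (hu : ∀ i, a < u i)
    (h : Tendsto u cofinite atTop) : a < ⨅ i, u i := by
  obtain ⟨i₀, hi₀⟩ := h.exists_forall_le
  exact (hu i₀).trans_le (le_ciInf hi₀)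

/-- The sum starts at `r ^ 1` because `μ {ω | Z ω < 1}` may be infinite. -/
lemma tsum_measure_lt_pow_succ_ne_top {Ω : Type*} [MeasurableSpace Ω] (μ : Measure Ω)
    {Z : Ω → ℝ} (hZ : Measurable Z) (hpos : ∀ᵐ ω ∂μ, 0 < Z ω)
    (hint : ∫⁻ ω, ENNReal.ofReal (-Real.log (min 1 (Z ω))) ∂μ < ⊤) {r : ℝ} (hr0 : 0 < r)
    (hr1 : r < 1) : ∑' n : ℕ, μ {ω | Z ω < r ^ (n + 1)} ≠ ∞ := by
  set c := -Real.log r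
  have hc : 0 < c := neg_pos.2 (Real.log_neg hr0 hr1)
  have hsub : ∀ n : ℕ, μ {ω | Z ω < r ^ (n + 1)} ≤
      μ {ω | (n : ℝ) + 1 ≤ -Real.log (min 1 (Z ω)) / c} := fun n =>
    measure_mono_ae <| hpos.mono fun ω hZω (hlt : Z ω < r ^ (n + 1)) => by
      have hmin : Real.log (min 1 (Z ω)) ≤ Real.log (Z ω) :=
        Real.log_le_log (lt_min one_pos hZω) (min_le_right _ _)
      have hlog : Real.log (Z ω) < (n + 1) * Real.log r := by
        simpa [Real.log_pow] using Real.log_lt_log hZω hlt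
      show _ ≤ _ / c
      rw [le_div_iff₀ hc]
      linarith
  have hmeas : Measurable fun ω => -Real.log (min 1 (Z ω)) / c :=
    (measurable_const.min hZ).log.neg.div_const c
  refine ne_of_lt ?_
  calc ∑' n : ℕ, μ {ω | Z ω < r ^ (n + 1)}
      ≤ ∑' n : ℕ, μ {ω | (n : ℝ) + 1 ≤ -Real.log (min 1 (Z ω)) / c} :=
        ENNReal.tsum_le_tsum hsub
    _ ≤ ∫⁻ ω, ENNReal.ofReal (-Real.log (min 1 (Z ω)) / c) ∂μ :=
        tsum_measure_natCast_add_one_le_le_lintegral μ hmeas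
    _ = (∫⁻ ω, ENNReal.ofReal (-Real.log (min 1 (Z ω))) ∂μ) * ENNReal.ofReal c⁻¹ := by
        simp_rw [div_eq_mul_inv, ENNReal.ofReal_mul' (inv_nonneg.2 hc.le)]
        exact lintegral_mul_const' _ _ ENNReal.ofReal_ne_top
    _ < ∞ := ENNReal.mul_lt_top hint ENNReal.ofReal_lt_top

theorem stmt_3_general {Ω : Type*} [MeasurableSpace Ω] (ℙ : Measure Ω)
    (Y : ℕ → Ω → ℝ) (hmeas : ∀ n, Measurable (Y n))
    (hident : ∀ n, ℙ.map (Y n) = ℙ.map (Y 0))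
    (hpos : ∀ᵐ ω ∂ℙ, 0 < Y 0 ω)
    (hint : ∫⁻ ω, ENNReal.ofReal (-Real.log (min 1 (Y 0 ω))) ∂ℙ < ⊤)
    (β : ℝ) (hβ : β ∈ Set.Ioo (0 : ℝ) 1) :
    ∀ᵐ ω ∂ℙ, 0 < ⨅ n : ℕ, Y n ω / β ^ n := by
  obtain ⟨r, hβr, hr1⟩ := exists_between hβ.2
  have hidentDistrib : ∀ n, ProbabilityTheory.IdentDistrib (Y n) (Y 0) ℙ ℙ := fun n =>
    ⟨(hmeas n).aemeasurable, (hmeas 0).aemeasurable, hident n⟩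
  have hYpos : ∀ᵐ ω ∂ℙ, ∀ n, 0 < Y n ω :=
    ae_all_iff.2 fun n => (hidentDistrib n).symm.ae_mem_snd measurableSet_Ioi hpos
  have hlaw : ∀ n (t : ℝ), ℙ {ω | Y n ω < t} = ℙ {ω | Y 0 ω < t} := fun n _ =>
    (hidentDistrib n).measure_mem_eq measurableSet_Iio
  have hsum : ∑' n : ℕ, ℙ {ω | Y (n + 1) ω < r ^ (n + 1)} ≠ ∞ := by
    simpa only [hlaw] using
      tsum_measure_lt_pow_succ_ne_top ℙ (hmeas 0) hpos hint (hβ.1.trans hβr) hr1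
  filter_upwards [hYpos, ae_eventually_notMem hsum] with ω hYω hlarge
  refine lt_iInf_of_tendsto_cofinite_atTop (fun n => div_pos (hYω n) (pow_pos hβ.1 n)) ?_
  rw [Nat.cofinite_eq_atTop, ← tendsto_add_atTop_iff_nat 1]
  refine tendsto_atTop_mono' _ (hlarge.mono fun n hn => ?_) <| (tendsto_add_atTop_iff_nat 1).2 <|
    tendsto_pow_atTop_atTop_of_one_lt ((one_lt_div hβ.1).2 hβr)
  rw [div_pow]
  exact div_le_div_of_nonneg_right (not_lt.1 hn) (pow_nonneg hβ.1.le _)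

/-- If `(Y_n)` are nonnegative, identically distributed random variables with
`E[log⁻ Y_0] < ∞` and `Y_0 > 0` a.s., then for `β ∈ (0,1)`,
`inf_n β^{-n} Y_n > 0` almost surely. -/
theorem stmt_3 {Ω : Type*} [MeasurableSpace Ω] (ℙ : Measure Ω) [IsProbabilityMeasure ℙ]
    (Y : ℕ → Ω → ℝ) (hmeas : ∀ n, Measurable (Y n))
    (hnonneg : ∀ n ω, 0 ≤ Y n ω)
    (hident : ∀ n, ℙ.map (Y n) = ℙ.map (Y 0))
    (hpos : ∀ᵐ ω ∂ℙ, 0 < Y 0 ω)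
    (hint : ∫⁻ ω, ENNReal.ofReal (-Real.log (min 1 (Y 0 ω))) ∂ℙ < ⊤)
    (β : ℝ) (hβ : β ∈ Set.Ioo (0 : ℝ) 1) :
    ∀ᵐ ω ∂ℙ, 0 < ⨅ n : ℕ, Y n ω / β ^ n :=
  stmt_3_general ℙ Y hmeas hident hpos hint β hβ
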